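/- Magnetization density conservation: if d : ℝ → M₄(ℂ) is a self-consistent trajectory, then the magnetization density Tr(d(t)·(n↑−n↓)) is independent of t ∈ ℝ, is a real number, and lies in the interval [−1,1]. -/

import Mathlib

/-!
Write `nₛ = Aₛ*Aₛ`. The CAR give `[nₛ, Aₛ*] = Aₛ*`, `[nₛ, Aₛ] = -Aₛ`, and make `nₛ` commute with
`Aₜ, Aₜ*` for `t ≠ s`. Hence `n↑ - n↓` commutes with `n↑`, `n↓` and with both pair operators
`A↑*A↓*`, `A↓A↑`, i.e. with `dh(c)` for every `c`, and cyclicity of the trace kills the derivative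
of `Tr(d(t)(n↑ - n↓))`. Its value lies in `[-1, 1]` because for a density matrix `d`,
`Tr(d nₛ) = Tr(Aₛ d Aₛ*) ≥ 0` and `Tr(d nₛ) = 1 - Tr(Aₛ* d Aₛ) ≤ 1`.
-/

open Matrix
open scoped ComplexOrder

noncomputable section

/-- `M₄(ℂ)`, the algebra of 4×4 complex matrices, identified with the linear
operators on the one-site fermionic Fock space `ℂ⁴`. -/
abbrev M4 : Type := Matrix (Fin 4) (Fin 4) ℂ

noncomputable instance : NormedAddCommGroup M4 := Matrix.normedAddCommGroup
noncomputable instance : NormedSpace ℝ M4 := Matrix.normedSpace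

/-- The canonical anticommutation relations for the two matrices `A↑ = Aup`,
`A↓ = Adn`: `Aₛ·Aₜ + Aₜ·Aₛ = 0` and `Aₛ·Aₜ* + Aₜ*·Aₛ = δ_{s,t}·1` for
`s, t ∈ {↑,↓}`. -/
def CAR (Aup Adn : M4) : Prop :=
  Aup * Aup + Aup * Aup = 0 ∧
  Aup * Adn + Adn * Aup = 0 ∧
  Adn * Adn + Adn * Adn = 0 ∧
  Aup * Aupᴴ + Aupᴴ * Aup = 1 ∧
  Aup * Adnᴴ + Adnᴴ * Aup = 0 ∧
  Adn * Aupᴴ + Aupᴴ * Adn = 0 ∧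
  Adn * Adnᴴ + Adnᴴ * Adn = 1

/-- `dh(c) := 2λ n↑n↓ − μ(n↑+n↓) − h(n↑−n↓) − γ(c·A↑*A↓* + c̄·A↓A↑)`,
where `nₛ := Aₛ*·Aₛ`. -/
def dh (Aup Adn : M4) (mu h lam gam : ℝ) (c : ℂ) : M4 :=
  (2 * lam : ℂ) • (Aupᴴ * Aup * (Adnᴴ * Adn))
    - (mu : ℂ) • (Aupᴴ * Aup + Adnᴴ * Adn)
    - (h : ℂ) • (Aupᴴ * Aup - Adnᴴ * Adn)
    - (gam : ℂ) • (c • (Aupᴴ * Adnᴴ) + (starRingEnd ℂ c) • (Adn * Aup))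

/-- A density matrix: Hermitian, positive semidefinite, of trace 1. -/
def IsDensityMatrix (d : M4) : Prop :=
  d.IsHermitian ∧ d.PosSemidef ∧ d.trace = 1

/-- A self-consistent trajectory: a differentiable map `d : ℝ → M₄(ℂ)` such that
`d t` is a density matrix for all `t` and
`d′(t) = −i·[dh(Tr(d(t)·A↓A↑)), d(t)]` for all `t ∈ ℝ`. -/
def SelfConsistent (Aup Adn : M4) (mu h lam gam : ℝ) (d : ℝ → M4) : Prop :=
  (∀ t : ℝ, IsDensityMatrix (d t)) ∧
  ∀ t : ℝ, HasDerivAt d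
      ((-Complex.I) •
        (dh Aup Adn mu h lam gam ((d t * (Adn * Aup)).trace) * d t
          - d t * dh Aup Adn mu h lam gam ((d t * (Adn * Aup)).trace))) t

attribute [local instance] LieRing.ofAssociativeRing

section Ring

variable {R : Type*} [Ring R]

theorem Ring.lie_mul (x y z : R) : ⁅x, y * z⁆ = ⁅x, y⁆ * z + y * ⁅x, z⁆ := by
  simp only [Ring.lie_def]
  noncomm_ring

theorem commute_mul_of_anticommute {x y z : R} (hxz : x * z = -(z * x))
    (hyz : y * z = -(z * y)) : Commute (x * y) z := by
  calc x * y * z = -(x * z * y) := by rw [mul_assoc, hyz, mul_neg, mul_assoc]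
    _ = z * (x * y) := by rw [hxz, neg_mul, neg_neg, mul_assoc]

variable {a c : R}

theorem lie_number_creation (hac : a * c + c * a = 1) (hcc : c * c = 0) :
    ⁅c * a, c⁆ = c := by
  calc ⁅c * a, c⁆ = c * (a * c + c * a) - c * c * a - c * c * a := by
        rw [Ring.lie_def]; noncomm_ring
    _ = c := by rw [hac, hcc]; simp

theorem lie_number_annihilation (hac : a * c + c * a = 1) (haa : a * a = 0) :
    ⁅c * a, a⁆ = -a := by
  calc ⁅c * a, a⁆ = c * (a * a) + c * (a * a) - (a * c + c * a) * a := by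
        rw [Ring.lie_def]; noncomm_ring
    _ = -a := by rw [hac, haa]; simp

end Ring

namespace CAR

variable {a b : M4}

theorem symm (hab : CAR a b) : CAR b a := by
  obtain ⟨h1, h2, h3, h4, h5, h6, h7⟩ := hab
  exact ⟨h3, by rwa [add_comm], h1, h7, h6, h5, h4⟩

theorem mul_self (hab : CAR a b) : a * a = 0 := by
  have h2 : (2 : ℂ) • (a * a) = 0 := by rw [two_smul]; exact hab.1
  exact (smul_eq_zero.mp h2).resolve_left two_ne_zero

theorem conjTranspose_mul_self (hab : CAR a b) : aᴴ * aᴴ = 0 := by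
  rw [← conjTranspose_mul, hab.mul_self, conjTranspose_zero]

theorem lie_number_conjTranspose (hab : CAR a b) : ⁅aᴴ * a, aᴴ⁆ = aᴴ :=
  lie_number_creation hab.2.2.2.1 hab.conjTranspose_mul_self

theorem lie_number_self (hab : CAR a b) : ⁅aᴴ * a, a⁆ = -a :=
  lie_number_annihilation hab.2.2.2.1 hab.mul_self

theorem commute_number_right (hab : CAR a b) : Commute (aᴴ * a) b :=
  commute_mul_of_anticommute
    (eq_neg_of_add_eq_zero_left ((add_comm _ _).trans hab.2.2.2.2.2.1))
    (eq_neg_of_add_eq_zero_left hab.2.1)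

theorem commute_number_conjTranspose_right (hab : CAR a b) : Commute (aᴴ * a) bᴴ := by
  refine commute_mul_of_anticommute (eq_neg_of_add_eq_zero_left ?_)
    (eq_neg_of_add_eq_zero_left hab.2.2.2.2.1)
  rw [← conjTranspose_mul, ← conjTranspose_mul, ← conjTranspose_add, add_comm, hab.2.1,
    conjTranspose_zero]

theorem commute_number_number (hab : CAR a b) : Commute (aᴴ * a) (bᴴ * b) :=
  hab.commute_number_conjTranspose_right.mul_right hab.commute_number_right

theorem commute_magnetization_dh (hab : CAR a b) (mu h lam gam : ℝ) (c : ℂ) :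
    Commute (aᴴ * a - bᴴ * b) (dh a b mu h lam gam c) := by
  have hna : Commute (aᴴ * a - bᴴ * b) (aᴴ * a) :=
    (Commute.refl _).sub_left hab.commute_number_number.symm
  have hnb : Commute (aᴴ * a - bᴴ * b) (bᴴ * b) :=
    hab.commute_number_number.sub_left (Commute.refl _)
  have hpair_creation : Commute (aᴴ * a - bᴴ * b) (aᴴ * bᴴ) := by
    rw [commute_iff_lie_eq, sub_lie, Ring.lie_mul, Ring.lie_mul, hab.lie_number_conjTranspose,
      commute_iff_lie_eq.mp hab.commute_number_conjTranspose_right,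
      commute_iff_lie_eq.mp hab.symm.commute_number_conjTranspose_right,
      hab.symm.lie_number_conjTranspose]
    simp
  have hpair_annihilation : Commute (aᴴ * a - bᴴ * b) (b * a) := by
    rw [commute_iff_lie_eq, sub_lie, Ring.lie_mul, Ring.lie_mul, hab.lie_number_self,
      commute_iff_lie_eq.mp hab.commute_number_right,
      commute_iff_lie_eq.mp hab.symm.commute_number_right, hab.symm.lie_number_self]
    simp
  unfold dh
  exact ((((hna.mul_right hnb).smul_right _).sub_right ((hna.add_right hnb).smul_right _)).sub_right
    ((hna.sub_right hnb).smul_right _)).sub_right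
    (((hpair_creation.smul_right _).add_right (hpair_annihilation.smul_right _)).smul_right _)

end CAR

section Matrix

variable {n : Type*} [Fintype n]

theorem trace_commutator_mul_eq_zero {H ρ X : Matrix n n ℂ} (hX : Commute X H) :
    ((H * ρ - ρ * H) * X).trace = 0 := by
  rw [sub_mul, trace_sub, mul_assoc, trace_mul_comm, mul_assoc, mul_assoc, hX.eq, sub_self]

attribute [local instance] Matrix.normedAddCommGroup Matrix.normedSpace

theorem trace_mul_eq_of_hasDerivAt_commutator {ρ H : ℝ → Matrix n n ℂ} {X : Matrix n n ℂ}
    (hρ : ∀ t, HasDerivAt ρ ((-Complex.I) • (H t * ρ t - ρ t * H t)) t)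
    (hX : ∀ t, Commute X (H t)) (s t : ℝ) : (ρ s * X).trace = (ρ t * X).trace := by
  let L : Matrix n n ℂ →L[ℝ] ℂ := LinearMap.toContinuousLinearMap
    (((traceLinearMap n ℂ ℂ).comp (LinearMap.mulRight ℂ X)).restrictScalars ℝ)
  have hderiv : ∀ t, HasDerivAt (fun s => (ρ s * X).trace) 0 t := fun t => by
    have hL : L ((-Complex.I) • (H t * ρ t - ρ t * H t)) = 0 := by
      change (((-Complex.I) • (H t * ρ t - ρ t * H t)) * X).trace = 0
      rw [smul_mul_assoc, trace_smul, trace_commutator_mul_eq_zero (hX t), smul_zero]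
    exact hL ▸ L.hasFDerivAt.comp_hasDerivAt t (hρ t)
  exact is_const_of_deriv_eq_zero (fun t => (hderiv t).differentiableAt)
    (fun t => (hderiv t).deriv) s t

theorem trace_mul_conjTranspose_mul_mem_Icc [DecidableEq n] {ρ A : Matrix n n ℂ}
    (hρ : ρ.PosSemidef) (hρ_trace : ρ.trace = 1) (hA : A * Aᴴ + Aᴴ * A = 1) :
    (ρ * (Aᴴ * A)).trace ∈ Set.Icc 0 1 := by
  have h_particle : (ρ * (Aᴴ * A)).trace = (A * ρ * Aᴴ).trace := by
    rw [← mul_assoc, trace_mul_cycle]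
  have h_hole : (ρ * (Aᴴ * A)).trace = 1 - (Aᴴ * ρ * A).trace := by
    rw [eq_sub_of_add_eq' hA, mul_sub, trace_sub, Matrix.mul_one, hρ_trace, ← mul_assoc,
      trace_mul_cycle]
  constructor
  · rw [h_particle]
    exact (hρ.mul_mul_conjTranspose_same A).trace_nonneg
  · rw [h_hole]
    exact sub_le_self 1 (hρ.conjTranspose_mul_mul_same A).trace_nonneg

end Matrix

theorem Complex.exists_ofReal_eq_sub_of_mem_Icc {x y : ℂ} (hx : x ∈ Set.Icc 0 1)
    (hy : y ∈ Set.Icc 0 1) : ∃ r : ℝ, r ∈ Set.Icc (-1) 1 ∧ x - y = r := by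
  simp only [Set.mem_Icc, Complex.le_def, Complex.zero_re, Complex.zero_im, Complex.one_re,
    Complex.one_im] at hx hy
  exact ⟨x.re - y.re, ⟨by linarith, by linarith⟩,
    Complex.ext (by simp) (by simp [← hx.1.2, ← hy.1.2])⟩

theorem magnetization_density_conserved (Aup Adn : M4) (hCAR : CAR Aup Adn)
    (mu h lam gam : ℝ)
    (d : ℝ → M4) (hd : SelfConsistent Aup Adn mu h lam gam d) :
    ∃ r : ℝ, (-1 : ℝ) ≤ r ∧ r ≤ 1 ∧
      ∀ t : ℝ, (d t * (Aupᴴ * Aup - Adnᴴ * Adn)).trace = (r : ℂ) := by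
  obtain ⟨hdensity, hderiv⟩ := hd
  obtain ⟨-, hpsd, htrace⟩ := hdensity 0
  obtain ⟨r, ⟨hr_lower, hr_upper⟩, hr⟩ := Complex.exists_ofReal_eq_sub_of_mem_Icc
    (trace_mul_conjTranspose_mul_mem_Icc hpsd htrace hCAR.2.2.2.1)
    (trace_mul_conjTranspose_mul_mem_Icc hpsd htrace hCAR.2.2.2.2.2.2)
  refine ⟨r, hr_lower, hr_upper, fun t => ?_⟩
  rw [trace_mul_eq_of_hasDerivAt_commutator hderiv
    (fun s => hCAR.commute_magnetization_dh mu h lam gam _) t 0, mul_sub, trace_sub, hr]
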